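/- Let A be a finite dimensional algebra over an algebraically closed field and T a cotilting A-module. For every short exact sequence 0 → X →^f Y →^g Z → 0 of A-modules with X, Y, Z ∈ ⊥T and every A-module N, the induced sequence Hom̄_A^T(Z,N) → Hom̄_A^T(Y,N) → Hom̄_A^T(X,N) (given by composition with g and with f) is exact, where Hom̄_A^T(−,−) denotes Hom_A(−,−) modulo the subspace of morphisms factoring through add T. -/

import Mathlib

noncomputable section

open CategoryTheory Function

namespace Cotilt

variable (A : Type) [Ring A]

/-- `X ∈ add T`: `X` is a direct summand of a finite direct sum of copies of `T`. -/
def InAdd (T X : ModuleCat.{0} A) : Prop :=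
  ∃ (n : ℕ) (Y : ModuleCat.{0} A), Nonempty ((↥X × ↥Y) ≃ₗ[A] (Fin n → ↥T))

/-- A morphism factors through a module in `add T`. -/
def FactorsThruAdd (T : ModuleCat.{0} A) {X Y : ModuleCat.{0} A}
    (f : ↥X →ₗ[A] ↥Y) : Prop :=
  ∃ (T' : ModuleCat.{0} A), InAdd A T T' ∧
    ∃ (g : ↥X →ₗ[A] ↥T') (h : ↥T' →ₗ[A] ↥Y), f = h.comp g

/-- `Ext¹_A(X, Y) = 0`: every short exact sequence `0 → Y → E → X → 0` splits. -/
def Ext1Zero (X Y : ModuleCat.{0} A) : Prop :=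
  ∀ (E : ModuleCat.{0} A) (f : ↥Y →ₗ[A] ↥E) (g : ↥E →ₗ[A] ↥X),
    Injective f → Surjective g → LinearMap.range f = LinearMap.ker g →
    ∃ s : ↥X →ₗ[A] ↥E, g.comp s = LinearMap.id

/-- `Z` is a (first) syzygy of `X`: there is a short exact sequence `0 → Z → P → X → 0`
with `P` projective. -/
def IsSyzygyOf (Z X : ModuleCat.{0} A) : Prop :=
  ∃ (P : ModuleCat.{0} A) (p : ↥P →ₗ[A] ↥X) (i : ↥Z →ₗ[A] ↥P),
    Module.Projective A ↥P ∧ Surjective p ∧ Injective i ∧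
    LinearMap.range i = LinearMap.ker p

/-- `Z` is an `n`-th syzygy of `X`. -/
def NthSyzygy : ℕ → ModuleCat.{0} A → ModuleCat.{0} A → Prop
  | 0, Z, X => Nonempty (↥Z ≃ₗ[A] ↥X)
  | n+1, Z, X => ∃ W : ModuleCat.{0} A, IsSyzygyOf A W X ∧ NthSyzygy n Z W

/-- `X ∈ ⊥T`, i.e. `Ext^i_A(X, T) = 0` for all `i > 0`.  By dimension shifting,
`Ext^{n+1}_A(X, T) ≅ Ext¹_A(Ω^n X, T)` for every `n`-th syzygy `Ω^n X` of `X`, so this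
is expressed by the vanishing of `Ext¹(Z, T)` for every iterated syzygy `Z` of `X`
(the case `n = 0`, `Z = X`, giving `Ext¹(X, T) = 0` itself). -/
def MemPerp (T X : ModuleCat.{0} A) : Prop :=
  ∀ (n : ℕ) (Z : ModuleCat.{0} A), NthSyzygy A n Z X → Ext1Zero A Z T

/-- Projective dimension at most `n`. -/
def ProjDimLE : ℕ → ModuleCat.{0} A → Prop
  | 0, X => Module.Projective A ↥X
  | n+1, X => ∃ (P : ModuleCat.{0} A) (f : ↥P →ₗ[A] ↥X),
      Module.Projective A ↥P ∧ Surjective f ∧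
      ProjDimLE n (ModuleCat.of A ↥(LinearMap.ker f))

/-- Injective dimension at most `n`. -/
def InjDimLE : ℕ → ModuleCat.{0} A → Prop
  | 0, X => Module.Injective A ↥X
  | n+1, X => ∃ (I : ModuleCat.{0} A) (f : ↥X →ₗ[A] ↥I),
      Module.Injective A ↥I ∧ Injective f ∧
      InjDimLE n (ModuleCat.of A (↥I ⧸ LinearMap.range f))

/-- The ring `A` has global dimension at most `n`. -/
def GlobalDimLE (n : ℕ) : Prop := ∀ X : ModuleCat.{0} A, ProjDimLE A n X

variable (k : Type) [Field k] [Algebra k A]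

/-- The `k`-linear dual `D(A) = Hom_k(A, k)` of `A`, as a left `A`-module via
`(a • φ) x = φ (x a)`. -/
def CoDual : Type := A →ₗ[k] k

instance : AddCommGroup (CoDual A k) := inferInstanceAs (AddCommGroup (A →ₗ[k] k))

instance : Module A (CoDual A k) where
  smul a φ := (φ : A →ₗ[k] k).comp (LinearMap.mulRight k a)
  one_smul φ := by
    show (φ : A →ₗ[k] k).comp (LinearMap.mulRight k (1 : A)) = φ
    ext x; show DFunLike.coe (F := A →ₗ[k] k) φ (x * 1) = DFunLike.coe (F := A →ₗ[k] k) φ x; rw [mul_one]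
  mul_smul a b φ := by
    show (φ : A →ₗ[k] k).comp (LinearMap.mulRight k (a * b)) =
      ((φ : A →ₗ[k] k).comp (LinearMap.mulRight k b)).comp (LinearMap.mulRight k a)
    ext x; show DFunLike.coe (F := A →ₗ[k] k) φ (x * (a * b)) = DFunLike.coe (F := A →ₗ[k] k) φ (x * a * b); rw [mul_assoc]
  smul_zero a := by
    show (0 : A →ₗ[k] k).comp (LinearMap.mulRight k a) = 0
    ext x; simp
  smul_add a φ ψ := by
    show ((φ + ψ : A →ₗ[k] k)).comp (LinearMap.mulRight k a) =
      (φ : A →ₗ[k] k).comp (LinearMap.mulRight k a) +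
        (ψ : A →ₗ[k] k).comp (LinearMap.mulRight k a)
    ext x; rfl
  add_smul a b φ := by
    show (φ : A →ₗ[k] k).comp (LinearMap.mulRight k (a + b)) =
      (φ : A →ₗ[k] k).comp (LinearMap.mulRight k a) +
        (φ : A →ₗ[k] k).comp (LinearMap.mulRight k b)
    ext x
    show DFunLike.coe (F := A →ₗ[k] k) φ (x * (a + b)) = DFunLike.coe (F := A →ₗ[k] k) φ (x * a) + DFunLike.coe (F := A →ₗ[k] k) φ (x * b)
    rw [mul_add]; exact map_add (F := A →ₗ[k] k) φ _ _
  zero_smul φ := by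
    show (φ : A →ₗ[k] k).comp (LinearMap.mulRight k (0 : A)) = 0
    ext x; show DFunLike.coe (F := A →ₗ[k] k) φ (x * 0) = 0; rw [mul_zero]; exact map_zero (F := A →ₗ[k] k) φ

/-- `X` admits a resolution `0 → T_r → ⋯ → T_0 → X → 0` by modules in `add T`
of length at most `r`. -/
def AddTCoresLE (T : ModuleCat.{0} A) : ℕ → ModuleCat.{0} A → Prop
  | 0, X => InAdd A T X
  | r+1, X => ∃ (T0 : ModuleCat.{0} A) (g : ↥T0 →ₗ[A] ↥X),
      InAdd A T T0 ∧ Surjective g ∧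
      AddTCoresLE T r (ModuleCat.of A ↥(LinearMap.ker g))

/-- `T` is a cotilting `A`-module: `T` is finitely generated, has finite injective
dimension, satisfies `Ext^i_A(T, T) = 0` for all `i > 0`, and there is an exact
sequence `0 → T_r → ⋯ → T_1 → T_0 → D(A) → 0` with all `T_i ∈ add T`, where
`D = Hom_k(−, k)`. -/
def IsCotilting (T : ModuleCat.{0} A) : Prop :=
  Module.Finite A ↥T ∧ (∃ d : ℕ, InjDimLE A d T) ∧ MemPerp A T T ∧
    ∃ r : ℕ, AddTCoresLE A T r (ModuleCat.of A (CoDual A k))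

end Cotilt


/-!
If `β ∘ f = h ∘ e` with `e : X → T'` and `T' ∈ add T`, then `Ext¹(Z, T') = 0`, so the pushout
of `0 → X → Y → Z → 0` along `e` splits and `e` extends to some `e' : Y → T'`. Now
`β - h ∘ e'` vanishes on `f(X) = ker g`, hence factors through `g`. The converse holds
because `g ∘ f = 0`.
-/

namespace Cotilt

section Pushout

variable {R X Y M W : Type*} [Ring R] [AddCommGroup X] [AddCommGroup Y] [AddCommGroup M]
  [AddCommGroup W] [Module R X] [Module R Y] [Module R M] [Module R W]
  (e : X →ₗ[R] M) (f : X →ₗ[R] Y)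

abbrev Pushout : Type _ := (M × Y) ⧸ LinearMap.range (e.prod (-f))

def Pushout.inl : M →ₗ[R] Pushout e f :=
  (LinearMap.range (e.prod (-f))).mkQ ∘ₗ LinearMap.inl R M Y

def Pushout.inr : Y →ₗ[R] Pushout e f :=
  (LinearMap.range (e.prod (-f))).mkQ ∘ₗ LinearMap.inr R M Y

def Pushout.desc (a : M →ₗ[R] W) (b : Y →ₗ[R] W) (h : a ∘ₗ e = b ∘ₗ f) :
    Pushout e f →ₗ[R] W :=
  (LinearMap.range (e.prod (-f))).liftQ (a.coprod b) <| by
    rintro _ ⟨x, rfl⟩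
    simpa [← sub_eq_add_neg, sub_eq_zero] using LinearMap.congr_fun h x

lemma Pushout.inr_comp : Pushout.inr e f ∘ₗ f = Pushout.inl e f ∘ₗ e := by
  ext x
  simp only [Pushout.inr, Pushout.inl, LinearMap.coe_comp, Function.comp_apply,
    Submodule.mkQ_apply, LinearMap.coe_inr, LinearMap.coe_inl, Submodule.Quotient.eq]
  exact ⟨-x, by simp⟩

lemma Pushout.inl_injective (hf : Injective f) : Injective (Pushout.inl e f) := by
  refine (injective_iff_map_eq_zero _).mpr fun m hm => ?_
  obtain ⟨x, hx⟩ : (m, (0 : Y)) ∈ LinearMap.range (e.prod (-f)) :=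
    (Submodule.Quotient.mk_eq_zero _).mp hm
  simp only [LinearMap.prod_apply, Function.prod, LinearMap.neg_apply, Prod.mk.injEq,
    neg_eq_zero] at hx
  rw [← hx.1, hf (hx.2.trans f.map_zero.symm), map_zero]

variable {Z : Type*} [AddCommGroup Z] [Module R Z] {g : Y →ₗ[R] Z}

lemma Pushout.desc_surjective (hg : Surjective g) (h : 0 ∘ₗ e = g ∘ₗ f) :
    Surjective (Pushout.desc e f 0 g h) := by
  intro z
  obtain ⟨y, rfl⟩ := hg z
  exact ⟨Pushout.inr e f y, by simp [Pushout.inr, Pushout.desc]⟩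

lemma Pushout.exact_inl_desc (hfg : Exact f g) (h : 0 ∘ₗ e = g ∘ₗ f) :
    Exact (Pushout.inl e f) (Pushout.desc e f 0 g h) := by
  refine LinearMap.exact_of_comp_of_mem_range (by ext; simp [Pushout.inl, Pushout.desc]) ?_
  rintro p hp
  obtain ⟨⟨m, y⟩, rfl⟩ := Submodule.mkQ_surjective _ p
  obtain ⟨x, rfl⟩ := (hfg y).mp (by simpa [Pushout.desc] using hp)
  refine ⟨m + e x, (Submodule.Quotient.eq _).mpr ⟨x, ?_⟩⟩
  simp

end Pushout

section ExtendsAlong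

variable {R X Y : Type*} [Ring R] [AddCommGroup X] [AddCommGroup Y] [Module R X] [Module R Y]
  (f : X →ₗ[R] Y)

def ExtendsAlong (M : Type*) [AddCommGroup M] [Module R M] : Prop :=
  ∀ e : X →ₗ[R] M, ∃ e' : Y →ₗ[R] M, e' ∘ₗ f = e

variable {f}

lemma ExtendsAlong.pi {ι : Type*} {M : ι → Type*} [∀ i, AddCommGroup (M i)]
    [∀ i, Module R (M i)] (h : ∀ i, ExtendsAlong f (M i)) : ExtendsAlong f (∀ i, M i) := by
  intro e
  choose e' he' using fun i => h i (LinearMap.proj i ∘ₗ e)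
  exact ⟨LinearMap.pi e', by ext x i; exact LinearMap.congr_fun (he' i) x⟩

lemma ExtendsAlong.of_retract {M M' : Type*} [AddCommGroup M] [Module R M] [AddCommGroup M']
    [Module R M'] (h : ExtendsAlong f M) (i : M' →ₗ[R] M) (p : M →ₗ[R] M')
    (hpi : p ∘ₗ i = LinearMap.id) : ExtendsAlong f M' := by
  intro e
  obtain ⟨e', he'⟩ := h (i ∘ₗ e)
  refine ⟨p ∘ₗ e', ?_⟩
  rw [LinearMap.comp_assoc, he', ← LinearMap.comp_assoc, hpi, LinearMap.id_comp]

lemma exists_comp_eq_of_exact {Z N : Type*} [AddCommGroup Z] [Module R Z] [AddCommGroup N]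
    [Module R N] {g : Y →ₗ[R] Z} (hfg : Exact f g) (hg : Surjective g)
    (δ : Y →ₗ[R] N) (hδ : δ ∘ₗ f = 0) : ∃ γ : Z →ₗ[R] N, γ ∘ₗ g = δ := by
  refine ⟨(LinearMap.range f).liftQ δ ?_ ∘ₗ
    (hfg.linearEquivOfSurjective hg).symm.toLinearMap, ?_⟩
  · rintro _ ⟨x, rfl⟩
    exact LinearMap.congr_fun hδ x
  · ext y
    simp

end ExtendsAlong

variable {A : Type} [Ring A]

lemma ExtendsAlong.of_inAdd {X Y : Type*} [AddCommGroup X] [Module A X] [AddCommGroup Y]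
    [Module A Y] {f : X →ₗ[A] Y} {T T' : ModuleCat.{0} A} (h : ExtendsAlong f T)
    (hT' : InAdd A T T') : ExtendsAlong f T' := by
  obtain ⟨n, W, ⟨e⟩⟩ := hT'
  refine (ExtendsAlong.pi fun _ : Fin n => h).of_retract (e ∘ₗ LinearMap.inl A T' W)
    (LinearMap.fst A T' W ∘ₗ e.symm) ?_
  ext t
  simp

lemma Ext1Zero.extendsAlong {X Y : Type} [AddCommGroup X] [Module A X] [AddCommGroup Y]
    [Module A Y] {f : X →ₗ[A] Y} {Z M : ModuleCat.{0} A} (h : Ext1Zero A Z M)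
    {g : Y →ₗ[A] Z} (hf : Injective f) (hg : Surjective g) (hfg : Exact f g) :
    ExtendsAlong f M := by
  intro e
  have hgf : 0 ∘ₗ e = g ∘ₗ f := by rw [LinearMap.zero_comp, hfg.linearMap_comp_eq_zero]
  have hexact := Pushout.exact_inl_desc e f hfg hgf
  have hinj := Pushout.inl_injective e f hf
  have hsurj := Pushout.desc_surjective e f hg hgf
  obtain ⟨s, hs⟩ := h (ModuleCat.of A (Pushout e f)) _ _ hinj hsurj hexact.linearMap_ker_eq.symm
  have hsplit := (hexact.split_tfae hinj hsurj).out 0 1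
  obtain ⟨r, hr⟩ := hsplit.mp ⟨s, hs⟩
  refine ⟨r ∘ₗ Pushout.inr e f, ?_⟩
  rw [LinearMap.comp_assoc, Pushout.inr_comp, ← LinearMap.comp_assoc, hr, LinearMap.id_comp]

lemma MemPerp.ext1Zero {T Z : ModuleCat.{0} A} (h : MemPerp A T Z) : Ext1Zero A Z T :=
  h 0 Z ⟨LinearEquiv.refl A Z⟩

lemma FactorsThruAdd.comp {T X Y N : ModuleCat.{0} A} {φ : Y →ₗ[A] N}
    (h : FactorsThruAdd A T φ) (ψ : X →ₗ[A] Y) : FactorsThruAdd A T (φ ∘ₗ ψ) := by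
  obtain ⟨T', hT', a, b, rfl⟩ := h
  exact ⟨T', hT', a ∘ₗ ψ, b, rfl⟩

theorem stable_hom_exact_general
    (A : Type) [Ring A]
    (T : ModuleCat.{0} A)
    (X Y Z : ModuleCat.{0} A)
    (hZ : MemPerp A T Z)
    (f : ↥X →ₗ[A] ↥Y) (g : ↥Y →ₗ[A] ↥Z)
    (hf : Function.Injective f) (hg : Function.Surjective g)
    (hfg : LinearMap.range f = LinearMap.ker g)
    (N : ModuleCat.{0} A) :
    ∀ β : ↥Y →ₗ[A] ↥N,
      (FactorsThruAdd A T (β.comp f) ↔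
        ∃ γ : ↥Z →ₗ[A] ↥N, FactorsThruAdd A T (β - γ.comp g)) := by
  have hexact : Exact f g := LinearMap.exact_iff.mpr hfg.symm
  intro β
  constructor
  · rintro ⟨T', hT', e, h, hβ⟩
    obtain ⟨e', he'⟩ := (hZ.ext1Zero.extendsAlong hf hg hexact).of_inAdd hT' e
    obtain ⟨γ, hγ⟩ := exists_comp_eq_of_exact hexact hg (β - h ∘ₗ e')
      (by rw [LinearMap.sub_comp, LinearMap.comp_assoc, he', hβ, sub_self])
    exact ⟨γ, T', hT', e', h, by rw [hγ, sub_sub_cancel]⟩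
  · rintro ⟨γ, hγ⟩
    convert hγ.comp f using 1
    rw [LinearMap.sub_comp, LinearMap.comp_assoc, hexact.linearMap_comp_eq_zero,
      LinearMap.comp_zero, sub_zero]

/-- Lemma 6.4 of Kimura, "Tilting theory of preprojective algebras
and c-sortable elements".

Let `A` be a finite dimensional algebra over an algebraically closed field `k` and `T`
a cotilting `A`-module.  For every short exact sequence `0 → X → Y → Z → 0` of
(finitely generated) `A`-modules with `X, Y, Z ∈ ⊥T` and every `A`-module `N`, the
induced sequence
`Hom̄_A^T(Z, N) → Hom̄_A^T(Y, N) → Hom̄_A^T(X, N)`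
(composition with `g`, resp. `f`) is exact, where `Hom̄_A^T(−,−)` is `Hom_A(−,−)`
modulo the morphisms factoring through `add T`.  Exactness at the middle term is
expressed elementwise: a morphism `β : Y → N` satisfies `β ∘ f ∈ [T]` if and only if
`β` agrees, modulo `[T]`, with a morphism factoring through `g`. -/
theorem stable_hom_exact
    (k : Type) [Field k] [IsAlgClosed k]
    (A : Type) [Ring A] [Algebra k A] [FiniteDimensional k A]
    (T : ModuleCat.{0} A) (hT : IsCotilting A k T)
    (X Y Z : ModuleCat.{0} A)
    (hXfg : Module.Finite A ↥X) (hYfg : Module.Finite A ↥Y) (hZfg : Module.Finite A ↥Z)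
    (hX : MemPerp A T X) (hY : MemPerp A T Y) (hZ : MemPerp A T Z)
    (f : ↥X →ₗ[A] ↥Y) (g : ↥Y →ₗ[A] ↥Z)
    (hf : Function.Injective f) (hg : Function.Surjective g)
    (hfg : LinearMap.range f = LinearMap.ker g)
    (N : ModuleCat.{0} A) (hNfg : Module.Finite A ↥N) :
    ∀ β : ↥Y →ₗ[A] ↥N,
      (FactorsThruAdd A T (β.comp f) ↔
        ∃ γ : ↥Z →ₗ[A] ↥N, FactorsThruAdd A T (β - γ.comp g)) :=
  stable_hom_exact_general A T X Y Z hZ f g hf hg hfg N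

end Cotilt
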